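/- arXiv:2306.02088 — 4 statements merged into one kernel-verified Lean document; each statement's English description precedes it below -/
import Mathlib

section
/- If α > ρ(P) - 1 for a nonnegative substochastic matrix P, then (1+α)I - P is invertible with nonnegative inverse, and every probability vector of the form (normalized convex combination of the rows of ((1+α)I - P)^{-1}) satisfies s P ≤ (1+α)s entrywise; conversely, every probability vector s satisfying s P ≤ (1+α)s entrywise is a convex combination of the L¹-normalized rows of ((1+α)I - P)^{-1}. -/
/-- The spectral radius of a real matrix: the supremum of the moduli of its
complex eigenvalues. -/
noncomputable def specRad {l : ℕ} (P : Matrix (Fin l) (Fin l) ℝ) : ℝ :=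
  sSup {r : ℝ | ∃ μ ∈ spectrum ℂ (P.map (Complex.ofReal ·)), r = ‖μ‖}

section helpers

open Filter Topology
open scoped ENNReal NNReal

attribute [local instance] Matrix.linftyOpSemiNormedRing Matrix.linftyOpNormedRing
  Matrix.linftyOpNormedAlgebra

lemma specRad_bdd {l : ℕ} (P : Matrix (Fin l) (Fin l) ℝ) :
    BddAbove {r : ℝ | ∃ μ ∈ spectrum ℂ (P.map (Complex.ofReal ·)), r = ‖μ‖} := by
  refine ⟨‖P.map (Complex.ofReal ·)‖ * ‖(1 : Matrix (Fin l) (Fin l) ℂ)‖, ?_⟩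
  rintro r ⟨μ, hμ, rfl⟩
  exact spectrum.norm_le_norm_mul_of_mem hμ

lemma specRad_nonneg {l : ℕ} (P : Matrix (Fin l) (Fin l) ℝ) : 0 ≤ specRad P := by
  rw [specRad]
  rcases Set.eq_empty_or_nonempty
      {r : ℝ | ∃ μ ∈ spectrum ℂ (P.map (Complex.ofReal ·)), r = ‖μ‖} with h | ⟨r, hr⟩
  · rw [h, Real.sSup_empty]
  · obtain ⟨μ, hμ, rfl⟩ := hr
    exact le_trans (norm_nonneg μ) (le_csSup (specRad_bdd P) ⟨μ, hμ, rfl⟩)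

lemma exists_nonneg_inverse {l : ℕ} (P : Matrix (Fin l) (Fin l) ℝ) (t : ℝ)
    (hP : ∀ a b, 0 ≤ P a b) (ht0 : 0 < t) (ht : specRad P < t) :
    ∃ S : Matrix (Fin l) (Fin l) ℝ, (∀ i j, 0 ≤ S i j) ∧
      (t • (1 : Matrix (Fin l) (Fin l) ℝ) - P) * S = 1 ∧
      S * (t • (1 : Matrix (Fin l) (Fin l) ℝ) - P) = 1 := by
  classical
  set Q : Matrix (Fin l) (Fin l) ℝ := t⁻¹ • P with hQ
  have hQn : ∀ a b, 0 ≤ Q a b := fun a b =>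
    mul_nonneg (inv_nonneg.mpr ht0.le) (hP a b)
  have hQpow : ∀ (n : ℕ) (a b : Fin l), 0 ≤ (Q ^ n) a b := by
    intro n
    induction n with
    | zero => intro a b; by_cases h : a = b <;> simp [h, Matrix.one_apply]
    | succ n ih =>
      intro a b
      rw [pow_succ, Matrix.mul_apply]
      exact Finset.sum_nonneg fun k _ => mul_nonneg (ih a k) (hQn k b)
  set φ : Matrix (Fin l) (Fin l) ℝ →+* Matrix (Fin l) (Fin l) ℂ :=
    (algebraMap ℝ ℂ).mapMatrix with hφdef
  have hφapp : ∀ (M : Matrix (Fin l) (Fin l) ℝ) (i j : Fin l),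
      φ M i j = (M i j : ℂ) := by
    intro M i j
    simp [hφdef, RingHom.mapMatrix_apply, Matrix.map_apply]
  set A : Matrix (Fin l) (Fin l) ℂ := φ Q with hAdef
  -- spectral radius of A is < 1
  have htinv : (t : ℂ)⁻¹ ≠ 0 := by
    simp [inv_ne_zero, Complex.ofReal_ne_zero, ht0.ne']
  have hA : A = (Units.mk0 ((t : ℂ)⁻¹) htinv) • (P.map (Complex.ofReal ·)) := by
    ext i j
    simp [hAdef, hφapp, hQ, Units.smul_def, Matrix.map_apply, Matrix.smul_apply,
      Complex.ofReal_mul, smul_eq_mul]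
  have hsr : spectralRadius ℂ A < 1 := by
    refine lt_of_le_of_lt (b := ENNReal.ofReal (t⁻¹ * specRad P)) ?_ ?_
    · rw [spectralRadius]
      refine iSup₂_le fun μ hμ => ?_
      rw [hA, spectrum.unit_smul_eq_smul] at hμ
      obtain ⟨ν, hν, rfl⟩ := hμ
      beta_reduce
      have h1 : ‖ν‖ ≤ specRad P := le_csSup (specRad_bdd P) ⟨ν, hν, rfl⟩
      have h2 : ‖((t : ℂ)⁻¹) • ν‖ = t⁻¹ * ‖ν‖ := by
        rw [smul_eq_mul, norm_mul, norm_inv]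
        congr 1
        rw [Complex.norm_real, Real.norm_eq_abs, abs_of_pos ht0]
      rw [← enorm_eq_nnnorm, ← ofReal_norm]
      refine ENNReal.ofReal_le_ofReal ?_
      simp only [Units.val_mk0]
      rw [h2]
      exact mul_le_mul_of_nonneg_left h1 (inv_nonneg.mpr ht0.le)
    · rw [ENNReal.ofReal_lt_one]
      calc t⁻¹ * specRad P < t⁻¹ * t := by
            exact mul_lt_mul_of_pos_left ht (inv_pos.mpr ht0)
        _ = 1 := inv_mul_cancel₀ ht0.ne'
  -- summability of the geometric series
  have hsum : Summable (fun n : ℕ => A ^ n) := by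
    obtain ⟨r, hr1, hr2⟩ := exists_between hsr
    have hrtop : r ≠ ⊤ := (hr2.trans ENNReal.one_lt_top).ne
    have hev : ∀ᶠ n : ℕ in atTop, (‖A ^ n‖₊ : ℝ≥0∞) ^ (1 / (n : ℝ)) < r :=
      (spectrum.pow_nnnorm_pow_one_div_tendsto_nhds_spectralRadius A).eventually_lt_const hr1
    have hrr1 : r.toReal < 1 := by
      rw [← ENNReal.toReal_one]
      exact (ENNReal.toReal_lt_toReal hrtop ENNReal.one_ne_top).mpr hr2
    refine Summable.of_norm_bounded_eventually_nat (g := fun n => r.toReal ^ n)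
      (summable_geometric_of_lt_one ENNReal.toReal_nonneg hrr1) ?_
    filter_upwards [hev, Filter.eventually_ge_atTop 1] with n hn hn1
    have hne : (n : ℝ) ≠ 0 := Nat.cast_ne_zero.mpr (by omega)
    have h1 : (‖A ^ n‖₊ : ℝ≥0∞) ≤ r ^ n := by
      have h2 : ((‖A ^ n‖₊ : ℝ≥0∞) ^ (1 / (n : ℝ))) ^ (n : ℝ) ≤ r ^ (n : ℝ) :=
        ENNReal.rpow_le_rpow hn.le (Nat.cast_nonneg n)
      rwa [← ENNReal.rpow_mul, one_div, inv_mul_cancel₀ hne, ENNReal.rpow_one,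
        ENNReal.rpow_natCast] at h2
    have h3 := ENNReal.toReal_mono (by exact ENNReal.pow_ne_top hrtop) h1
    simpa [ENNReal.toReal_pow] using h3
  set Sc : Matrix (Fin l) (Fin l) ℂ := ∑' n : ℕ, A ^ n with hSc
  have hpartial : Tendsto (fun N => ∑ n ∈ Finset.range N, A ^ n) atTop (𝓝 Sc) :=
    hsum.hasSum.tendsto_sum_nat
  have hpow0 : Tendsto (fun n : ℕ => A ^ n) atTop (𝓝 0) := hsum.tendsto_atTop_zero
  have hgeom : ∀ N : ℕ, (1 - A) * ∑ n ∈ Finset.range N, A ^ n = 1 - A ^ N := by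
    intro N
    calc (1 - A) * ∑ n ∈ Finset.range N, A ^ n
        = -((A - 1) * ∑ n ∈ Finset.range N, A ^ n) := by rw [← neg_sub A 1, neg_mul]
      _ = 1 - A ^ N := by rw [mul_geom_sum, neg_sub]
  have hgeom' : ∀ N : ℕ, (∑ n ∈ Finset.range N, A ^ n) * (1 - A) = 1 - A ^ N := by
    intro N
    calc (∑ n ∈ Finset.range N, A ^ n) * (1 - A)
        = -((∑ n ∈ Finset.range N, A ^ n) * (A - 1)) := by rw [← neg_sub A 1, mul_neg]
      _ = 1 - A ^ N := by rw [geom_sum_mul, neg_sub]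
  have hlim1 : Tendsto (fun N : ℕ => 1 - A ^ N) atTop (𝓝 (1 : Matrix (Fin l) (Fin l) ℂ)) := by
    simpa using (tendsto_const_nhds (x := (1 : Matrix (Fin l) (Fin l) ℂ))).sub hpow0
  have hleftC : (1 - A) * Sc = 1 := by
    have h1 : Tendsto (fun N => (1 - A) * ∑ n ∈ Finset.range N, A ^ n) atTop
        (𝓝 ((1 - A) * Sc)) := hpartial.const_mul _
    rw [funext hgeom] at h1
    exact tendsto_nhds_unique h1 hlim1
  have hrightC : Sc * (1 - A) = 1 := by
    have h1 : Tendsto (fun N => (∑ n ∈ Finset.range N, A ^ n) * (1 - A)) atTop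
        (𝓝 (Sc * (1 - A))) := hpartial.mul_const _
    rw [funext hgeom'] at h1
    exact tendsto_nhds_unique h1 hlim1
  -- entries of Sc
  have hApow : ∀ (n : ℕ) (i j : Fin l), (A ^ n) i j = ((Q ^ n) i j : ℂ) := by
    intro n i j
    rw [hAdef, ← map_pow, hφapp]
  have hentry : ∀ i j, Sc i j = ((∑' n : ℕ, (Q ^ n) i j : ℝ) : ℂ) := by
    intro i j
    let e : Matrix (Fin l) (Fin l) ℂ →ₗ[ℂ] ℂ :=
      { toFun := fun M => M i j
        map_add' := fun _ _ => rfl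
        map_smul' := fun _ _ => rfl }
    have he : Continuous e := e.continuous_of_finiteDimensional
    have h1 : (⟨e, he⟩ : Matrix (Fin l) (Fin l) ℂ →L[ℂ] ℂ) Sc
        = ∑' n : ℕ, (A ^ n) i j := by
      rw [hSc]
      exact ContinuousLinearMap.map_tsum _ hsum
    have h2 : Sc i j = ∑' n : ℕ, ((Q ^ n) i j : ℂ) := by
      have h1' : Sc i j = ∑' n : ℕ, (A ^ n) i j := h1
      rw [h1']
      exact tsum_congr fun n => hApow n i j
    rw [h2]
    exact (RCLike.ofReal_tsum (𝕜 := ℂ) _).symm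
  set Sr : Matrix (Fin l) (Fin l) ℝ := Matrix.of fun i j => ∑' n : ℕ, (Q ^ n) i j with hSr
  have hSrnn : ∀ i j, 0 ≤ Sr i j := fun i j => tsum_nonneg fun n => hQpow n i j
  have hmap : Sc = φ Sr := by
    ext i j
    rw [hentry i j, hφapp]
    rfl
  have hφinj : Function.Injective φ := by
    intro M N h
    ext i j
    have h2 := congrArg (fun M => M i j) h
    simpa [hφapp] using h2
  have hleftR : (1 - Q) * Sr = 1 := by
    apply hφinj
    rw [map_mul, map_sub, map_one, ← hmap, ← hAdef, hleftC]
  have hrightR : Sr * (1 - Q) = 1 := by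
    apply hφinj
    rw [map_mul, map_sub, map_one, ← hmap, ← hAdef, hrightC]
  refine ⟨t⁻¹ • Sr, fun i j => mul_nonneg (inv_nonneg.mpr ht0.le) (hSrnn i j), ?_, ?_⟩
  · have hTQ : t • (1 : Matrix (Fin l) (Fin l) ℝ) - P = t • (1 - Q) := by
      rw [smul_sub, hQ, smul_smul, mul_inv_cancel₀ ht0.ne', one_smul]
    rw [hTQ, smul_mul_assoc, mul_smul_comm, smul_smul, mul_inv_cancel₀ ht0.ne',
      one_smul, hleftR]
  · have hTQ : t • (1 : Matrix (Fin l) (Fin l) ℝ) - P = t • (1 - Q) := by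
      rw [smul_sub, hQ, smul_smul, mul_inv_cancel₀ ht0.ne', one_smul]
    rw [hTQ, mul_smul_comm, smul_mul_assoc, smul_smul, mul_inv_cancel₀ ht0.ne',
      one_smul, hrightR]

end helpers

/-- If `α > ρ(P) - 1` for a nonnegative substochastic matrix `P`, then
`(1+α)I - P` is invertible with nonnegative inverse, and the maintainable region
for growth factor `1+α` is exactly the convex hull of the L¹-normalized rows of
`((1+α)I - P)⁻¹`. -/
theorem maintainable_region_vertices {l : ℕ} (P : Matrix (Fin l) (Fin l) ℝ)
    (α : ℝ) (hP : ∀ a b, 0 ≤ P a b) (hsub : ∀ a, ∑ b, P a b ≤ 1)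
    (hα : specRad P - 1 < α) :
    IsUnit ((1 + α) • (1 : Matrix (Fin l) (Fin l) ℝ) - P) ∧
    (∀ i j, 0 ≤ ((1 + α) • (1 : Matrix (Fin l) (Fin l) ℝ) - P)⁻¹ i j) ∧
    {s : Fin l → ℝ | (∀ i, 0 ≤ s i) ∧ (∑ i, s i = 1) ∧
        ∀ j, Matrix.vecMul s P j ≤ (1 + α) * s j} =
      convexHull ℝ {v : Fin l → ℝ | ∃ i : Fin l,
        v = fun j => ((1 + α) • (1 : Matrix (Fin l) (Fin l) ℝ) - P)⁻¹ i j /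
          ∑ m, ((1 + α) • (1 : Matrix (Fin l) (Fin l) ℝ) - P)⁻¹ i m} := by
  classical
  have ht0 : 0 < 1 + α := by have := specRad_nonneg P; linarith
  have ht : specRad P < 1 + α := by linarith
  obtain ⟨S, hSnn, hTS, hST⟩ := exists_nonneg_inverse P (1 + α) hP ht0 ht
  set T := (1 + α) • (1 : Matrix (Fin l) (Fin l) ℝ) - P with hT
  have hinv : T⁻¹ = S := Matrix.inv_eq_right_inv hTS
  have hUnit : IsUnit T := ⟨⟨T, S, hTS, hST⟩, rfl⟩
  refine ⟨hUnit, fun i j => by rw [hinv]; exact hSnn i j, ?_⟩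
  rw [hinv]
  -- helper : vecMul with smul matrix
  have hsmulvec : ∀ (x : Fin l → ℝ) (c : ℝ) (M : Matrix (Fin l) (Fin l) ℝ),
      Matrix.vecMul x (c • M) = c • Matrix.vecMul x M := by
    intro x c M
    funext j
    simp only [Matrix.vecMul, dotProduct, Matrix.smul_apply, smul_eq_mul,
      Pi.smul_apply, Finset.mul_sum]
    exact Finset.sum_congr rfl fun k _ => by ring
  have hvec : ∀ (s : Fin l → ℝ) (j : Fin l),
      Matrix.vecMul s T j = (1 + α) * s j - Matrix.vecMul s P j := by
    intro s j
    rw [hT, Matrix.vecMul_sub, hsmulvec, Matrix.vecMul_one]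
    simp [smul_eq_mul]
  have hvecS : ∀ (i j : Fin l),
      Matrix.vecMul (fun k => S i k) T j = (S * T) i j := by
    intro i j
    simp [Matrix.vecMul, dotProduct, Matrix.mul_apply]
  have hr : ∀ i, 0 < ∑ m, S i m := by
    intro i
    rcases (Finset.sum_nonneg fun m _ => hSnn i m).lt_or_eq with h | h
    · exact h
    · exfalso
      have hz : ∀ m, S i m = 0 := fun m =>
        (Finset.sum_eq_zero_iff_of_nonneg fun m _ => hSnn i m).mp h.symm m (Finset.mem_univ m)
      have h1 : (S * T) i i = 0 := by
        rw [Matrix.mul_apply]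
        exact Finset.sum_eq_zero fun k _ => by rw [hz k, zero_mul]
      rw [hST, Matrix.one_apply_eq] at h1
      exact one_ne_zero h1
  apply Set.Subset.antisymm
  · -- region ⊆ convex hull
    rintro s ⟨hs0, hs1, hs2⟩
    set y := Matrix.vecMul s T with hy
    have hy0 : ∀ i, 0 ≤ y i := by
      intro i
      rw [hy, hvec]
      linarith [hs2 i]
    have hys : Matrix.vecMul y S = s := by
      rw [hy, Matrix.vecMul_vecMul, hTS, Matrix.vecMul_one]
    set c : Fin l → ℝ := fun i => y i * (∑ m, S i m) with hc
    have hc0 : ∀ i ∈ Finset.univ, (0:ℝ) ≤ c i := fun i _ => mul_nonneg (hy0 i) (hr i).le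
    have hcsum : ∑ i, c i = 1 := by
      calc ∑ i, y i * ∑ m, S i m = ∑ i, ∑ m, y i * S i m := by
            exact Finset.sum_congr rfl fun i _ => Finset.mul_sum _ _ _
        _ = ∑ m, ∑ i, y i * S i m := Finset.sum_comm
        _ = ∑ m, Matrix.vecMul y S m := by
            exact Finset.sum_congr rfl fun m _ => by
              simp [Matrix.vecMul, dotProduct]
        _ = ∑ m, s m := by rw [hys]
        _ = 1 := hs1
    have hrepr : s = ∑ i, c i • (fun j => S i j / ∑ m, S i m) := by
      funext j
      rw [Finset.sum_apply]
      have h1 : ∀ i, (c i • fun j => S i j / ∑ m, S i m) j = y i * S i j := by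
        intro i
        have hne : (∑ m, S i m) ≠ 0 := (hr i).ne'
        simp only [Pi.smul_apply, smul_eq_mul, hc]
        field_simp
      rw [Finset.sum_congr rfl fun i _ => h1 i]
      conv_lhs => rw [← hys]
      simp [Matrix.vecMul, dotProduct]
    rw [hrepr]
    exact (convex_convexHull ℝ _).sum_mem hc0 hcsum
      (fun i _ => subset_convexHull ℝ _ ⟨i, rfl⟩)
  · -- convex hull ⊆ region
    refine convexHull_min ?_ ?_
    · rintro v ⟨i, rfl⟩
      refine ⟨fun j => div_nonneg (hSnn i j) (hr i).le, ?_, ?_⟩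
      · rw [← Finset.sum_div, div_self (hr i).ne']
      · intro j
        have hbase : Matrix.vecMul (fun k => S i k) P j ≤ (1 + α) * S i j := by
          have h0 : 0 ≤ Matrix.vecMul (fun k => S i k) T j := by
            rw [hvecS, hST]
            rcases eq_or_ne i j with h | h <;> simp [Matrix.one_apply, h]
          rw [hvec] at h0
          linarith
        have hv : (fun j => S i j / ∑ m, S i m)
            = (∑ m, S i m)⁻¹ • (fun k => S i k) := by
          funext k
          simp [div_eq_inv_mul]
        rw [hv, Matrix.smul_vecMul]
        simp only [Pi.smul_apply, smul_eq_mul]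
        calc (∑ m, S i m)⁻¹ * Matrix.vecMul (fun k => S i k) P j
            ≤ (∑ m, S i m)⁻¹ * ((1 + α) * S i j) :=
              mul_le_mul_of_nonneg_left hbase (inv_nonneg.mpr (hr i).le)
          _ = (1 + α) * ((∑ m, S i m)⁻¹ * S i j) := by ring
    · rintro x ⟨hx0, hx1, hx2⟩ z ⟨hz0, hz1, hz2⟩ a b ha hb hab
      refine ⟨fun i => add_nonneg (mul_nonneg ha (hx0 i)) (mul_nonneg hb (hz0 i)), ?_, ?_⟩
      · simp only [Pi.add_apply, Pi.smul_apply, smul_eq_mul]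
        rw [Finset.sum_add_distrib, ← Finset.mul_sum, ← Finset.mul_sum, hx1, hz1,
          mul_one, mul_one]
        exact hab
      · intro j
        have hvadd : Matrix.vecMul (a • x + b • z) P j
            = a * Matrix.vecMul x P j + b * Matrix.vecMul z P j := by
          rw [Matrix.add_vecMul, Matrix.smul_vecMul, Matrix.smul_vecMul]
          simp
        have hev : (a • x + b • z) j = a * x j + b * z j := by simp
        rw [hvadd, hev]
        have h1 := mul_le_mul_of_nonneg_left (hx2 j) ha
        have h2 := mul_le_mul_of_nonneg_left (hz2 j) hb
        calc a * Matrix.vecMul x P j + b * Matrix.vecMul z P j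
            ≤ a * ((1 + α) * x j) + b * ((1 + α) * z j) := add_le_add h1 h2
          _ = (1 + α) * (a * x j + b * z j) := by ring
end

section
/- For a Markov system with constant total size and invertible I - P (P substochastic nonnegative), a probability vector s is maintainable (s P ≤ s entrywise) if and only if s is a convex combination of the L¹-normalized rows of (I - P)^{-1}. -/
open Matrix Finset
open scoped NNReal

section Aux

attribute [local instance]
  Matrix.linftyOpNormedRing Matrix.linftyOpNormedAlgebra

variable {l : ℕ}

private lemma substoch_norm_lt_one (P : Matrix (Fin l) (Fin l) ℝ)
    (hP : ∀ a b, 0 ≤ P a b) (hrow : ∀ a, ∑ b, P a b < 1) : ‖P‖ < 1 := by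
  rw [Matrix.linfty_opNorm_def]
  have h : ∀ i : Fin l, (∑ j, ‖P i j‖₊ : ℝ≥0) < 1 := by
    intro i
    rw [← NNReal.coe_lt_coe]
    push_cast
    calc ∑ j, (‖P i j‖ : ℝ) = ∑ j, P i j := by
          refine Finset.sum_congr rfl fun j _ => ?_
          rw [Real.norm_eq_abs, abs_of_nonneg (hP i j)]
      _ < 1 := hrow i
  have : ((Finset.univ : Finset (Fin l)).sup fun i => ∑ j, ‖P i j‖₊) < 1 := by
    rw [Finset.sup_lt_iff (by norm_num : (⊥ : ℝ≥0) < 1)]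
    exact fun i _ => h i
  exact_mod_cast this

private lemma pow_entry_nonneg (P : Matrix (Fin l) (Fin l) ℝ)
    (hP : ∀ a b, 0 ≤ P a b) : ∀ n i j, 0 ≤ (P ^ n) i j := by
  intro n
  induction n with
  | zero =>
    intro i j
    simp only [pow_zero, Matrix.one_apply]
    split <;> norm_num
  | succ n ih =>
    intro i j
    rw [pow_succ, Matrix.mul_apply]
    exact Finset.sum_nonneg fun k _ => mul_nonneg (ih i k) (hP k j)

private lemma inv_entry_nonneg (P : Matrix (Fin l) (Fin l) ℝ)
    (hP : ∀ a b, 0 ≤ P a b) (hrow : ∀ a, ∑ b, P a b < 1) :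
    ∀ i j, 0 ≤ (1 - P)⁻¹ i j := by
  intro i j
  have hnorm : ‖P‖ < 1 := substoch_norm_lt_one P hP hrow
  have hsum : HasSum (fun n : ℕ => P ^ n) (Ring.inverse (1 - P)) :=
    hasSum_geom_series_inverse P hnorm
  let φ : Matrix (Fin l) (Fin l) ℝ →ₗ[ℝ] ℝ :=
    { toFun := fun A => A i j
      map_add' := fun _ _ => rfl
      map_smul' := fun _ _ => rfl }
  have hφ : Continuous φ := φ.continuous_of_finiteDimensional
  have h2 : HasSum (fun n : ℕ => (P ^ n) i j) (Ring.inverse (1 - P) i j) :=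
    hsum.map φ.toAddMonoidHom hφ
  rw [Matrix.nonsing_inv_eq_ringInverse, ← h2.tsum_eq]
  exact tsum_nonneg fun n => pow_entry_nonneg P hP n i j

private lemma isUnit_one_sub_substoch (P : Matrix (Fin l) (Fin l) ℝ)
    (hP : ∀ a b, 0 ≤ P a b) (hrow : ∀ a, ∑ b, P a b < 1) :
    IsUnit ((1 : Matrix (Fin l) (Fin l) ℝ) - P) :=
  isUnit_one_sub_of_norm_lt_one (substoch_norm_lt_one P hP hrow)

end Aux

/-- For a constant-size Markov system with substochastic `P` (row sums `< 1`),
a probability vector `s` is maintainable (`sP ≤ s` entrywise) iff `s` is a convex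
combination of the L¹-normalized rows of `(I - P)^{-1}`. -/
theorem maintainable_iff_convexHull {l : ℕ} (P : Matrix (Fin l) (Fin l) ℝ)
    (hP : ∀ a b, 0 ≤ P a b) (hrow : ∀ a, ∑ b, P a b < 1)
    (s : Fin l → ℝ) (hs0 : ∀ i, 0 ≤ s i) (hs1 : ∑ i, s i = 1) :
    (∀ j, Matrix.vecMul s P j ≤ s j) ↔
      s ∈ convexHull ℝ {v : Fin l → ℝ | ∃ i : Fin l,
        v = fun j => (1 - P)⁻¹ i j / ∑ m, (1 - P)⁻¹ i m} := by
  classical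
  set Q : Matrix (Fin l) (Fin l) ℝ := (1 - P)⁻¹ with hQdef
  have hQ0 : ∀ i j, 0 ≤ Q i j := inv_entry_nonneg P hP hrow
  have hu : IsUnit ((1 : Matrix (Fin l) (Fin l) ℝ) - P) :=
    isUnit_one_sub_substoch P hP hrow
  have hud : IsUnit ((1 : Matrix (Fin l) (Fin l) ℝ) - P).det :=
    (Matrix.isUnit_iff_isUnit_det _).mp hu
  have hQl : Q * (1 - P) = 1 := Matrix.nonsing_inv_mul _ hud
  have hQr : (1 - P) * Q = 1 := Matrix.mul_nonsing_inv _ hud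
  have hQeq : Q = 1 + P * Q := by
    have h1 : Q - P * Q = 1 := by
      calc Q - P * Q = (1 - P) * Q := by noncomm_ring
        _ = 1 := hQr
    exact sub_eq_iff_eq_add.mp h1
  have hdiag : ∀ i, 1 ≤ Q i i := by
    intro i
    have h1 : Q i i = 1 + (P * Q) i i := by
      conv_lhs => rw [hQeq]
      simp [Matrix.add_apply, Matrix.one_apply]
    have h2 : 0 ≤ (P * Q) i i := by
      rw [Matrix.mul_apply]
      exact Finset.sum_nonneg fun k _ => mul_nonneg (hP i k) (hQ0 k i)
    linarith
  have hr : ∀ i, 0 < ∑ m, Q i m := by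
    intro i
    have := Finset.single_le_sum (fun m _ => hQ0 i m) (Finset.mem_univ i)
    linarith [hdiag i]
  constructor
  · -- maintainable → convex combination
    intro hm
    set x : Fin l → ℝ := fun j => s j - Matrix.vecMul s P j with hx
    have hx0 : ∀ j, 0 ≤ x j := fun j => sub_nonneg.2 (hm j)
    have hxQ : Matrix.vecMul x Q = s := by
      have h1 : x = Matrix.vecMul s (1 - P) := by
        funext j
        simp [hx, Matrix.vecMul_sub, Matrix.vecMul_one]
      rw [h1, Matrix.vecMul_vecMul, hQr, Matrix.vecMul_one]
    have hxQ' : ∀ j, ∑ i, x i * Q i j = s j := by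
      intro j
      have := congrFun hxQ j
      simpa [Matrix.vecMul, dotProduct] using this
    set w : Fin l → ℝ := fun i => x i * ∑ m, Q i m with hw
    have hw0 : ∀ i ∈ (Finset.univ : Finset (Fin l)), 0 ≤ w i :=
      fun i _ => mul_nonneg (hx0 i) (hr i).le
    have hwsum : ∑ i, w i = 1 := by
      calc ∑ i, w i = ∑ i, ∑ m, x i * Q i m := by
            simp [hw, Finset.mul_sum]
        _ = ∑ m, ∑ i, x i * Q i m := Finset.sum_comm
        _ = ∑ m, s m := by simp [hxQ']
        _ = 1 := hs1
    set z : Fin l → (Fin l → ℝ) := fun i => fun j => Q i j / ∑ m, Q i m with hz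
    have key : s = Finset.univ.centerMass w z := by
      rw [Finset.centerMass_eq_of_sum_1 _ _ hwsum]
      funext j
      rw [Finset.sum_apply]
      have hterm : ∀ i, (w i • z i) j = x i * Q i j := by
        intro i
        have hri : (∑ m, Q i m) ≠ 0 := (hr i).ne'
        show w i * z i j = x i * Q i j
        have hwz : w i * z i j = (x i * ∑ m, Q i m) * (Q i j / ∑ m, Q i m) := rfl
        rw [hwz]
        field_simp
      rw [Finset.sum_congr rfl fun i _ => hterm i, hxQ' j]
    rw [key]
    refine Finset.centerMass_mem_convexHull _ hw0 (by rw [hwsum]; norm_num) ?_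
    intro i _
    exact ⟨i, rfl⟩
  · -- convex combination → maintainable
    intro hmem
    set C : Set (Fin l → ℝ) := {v | ∀ j, Matrix.vecMul v P j ≤ v j} with hC
    have hconv : Convex ℝ C := by
      intro u hu' v hv' a b ha hb hab j
      have h1 : Matrix.vecMul (a • u + b • v) P j
          = a * Matrix.vecMul u P j + b * Matrix.vecMul v P j := by
        rw [Matrix.add_vecMul]
        simp [Matrix.smul_vecMul]
      have h2 : (a • u + b • v) j = a * u j + b * v j := by simp
      rw [h1, h2]
      exact add_le_add (mul_le_mul_of_nonneg_left (hu' j) ha)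
        (mul_le_mul_of_nonneg_left (hv' j) hb)
    have hsub : {v : Fin l → ℝ | ∃ i : Fin l,
        v = fun j => (1 - P)⁻¹ i j / ∑ m, (1 - P)⁻¹ i m} ⊆ C := by
      rintro v ⟨i, rfl⟩ j
      have hvec : Matrix.vecMul (fun k => Q i k) (1 - P) j = (Q * (1 - P)) i j := by
        simp [Matrix.vecMul, Matrix.mul_apply, dotProduct]
      have hone : Matrix.vecMul (fun k => Q i k) (1 - P) j
          = (1 : Matrix (Fin l) (Fin l) ℝ) i j := by
        rw [hvec, hQl]
      have hsplit : Matrix.vecMul (fun k => Q i k) (1 - P) j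
          = Q i j - Matrix.vecMul (fun k => Q i k) P j := by
        simp [Matrix.vecMul_sub, Matrix.vecMul_one]
      have h01 : (0:ℝ) ≤ (1 : Matrix (Fin l) (Fin l) ℝ) i j := by
        rw [Matrix.one_apply]; split <;> norm_num
      have hge : Matrix.vecMul (fun k => Q i k) P j ≤ Q i j := by
        have h3 : (0:ℝ) ≤ Q i j - Matrix.vecMul (fun k => Q i k) P j := by
          rw [← hsplit, hone]; exact h01
        linarith
      have hscaled : Matrix.vecMul (fun k => Q i k / ∑ m, Q i m) P j
          = (∑ m, Q i m)⁻¹ * Matrix.vecMul (fun k => Q i k) P j := by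
        simp [Matrix.vecMul, dotProduct, div_eq_inv_mul, Finset.mul_sum, mul_assoc]
      have hrhs : (fun j => (1 - P)⁻¹ i j / ∑ m, (1 - P)⁻¹ i m) j
          = (∑ m, Q i m)⁻¹ * Q i j := by
        simp [div_eq_inv_mul, hQdef]
      show Matrix.vecMul (fun j => (1 - P)⁻¹ i j / ∑ m, (1 - P)⁻¹ i m) P j
          ≤ (fun j => (1 - P)⁻¹ i j / ∑ m, (1 - P)⁻¹ i m) j
      rw [hrhs]
      have hLHS : Matrix.vecMul (fun j => (1 - P)⁻¹ i j / ∑ m, (1 - P)⁻¹ i m) P j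
          = Matrix.vecMul (fun k => Q i k / ∑ m, Q i m) P j := rfl
      rw [hLHS, hscaled]
      exact mul_le_mul_of_nonneg_left hge (inv_nonneg.mpr (hr i).le)
    exact convexHull_min hsub hconv hmem
end

section
/- Suppose s is an SR-maintainable structure for a constant-size semi-Markov system with transition matrix P_SM (all row sums strictly less than 1), and let (s_SB(t))_t be any associated seniority-based path. Then s_SB(t) converges as t → ∞ to a limit s_SB* which is maintainable for P_SM (i.e., s_SB* P_SM ≤ s_SB* entrywise). -/
/-- If `s` is an SR-maintainable structure for a constant-size semi-Markov system
with seniority-based transition matrix `P` (rows strictly substochastic), then any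
associated seniority-based path of structures `n t / ‖n t‖₁` converges to a limit
`s_SB*` which is maintainable for `P`. States are pairs `(b, a)` of organisational
state `b` and seniority `a`. -/
theorem SR_path_converges {l K : ℕ}
    (P : Matrix (Fin l × Fin (K + 1)) (Fin l × Fin (K + 1)) ℝ)
    (hP : ∀ i j, 0 ≤ P i j)
    (hrow : ∀ i, ∑ j, P i j < 1)
    (hstruct : ∀ (b : Fin l) (a : Fin (K + 1)) (b' : Fin l) (a' : Fin (K + 1)),
      P (b, a) (b', a') ≠ 0 →
        (b' = b ∧ (a' : ℕ) = (a : ℕ) + 1) ∨ (b' ≠ b ∧ a' = 0))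
    (s : Fin l → ℝ) (hs0 : ∀ b, 0 ≤ s b) (hs1 : ∑ b, s b = 1)
    (n : ℕ → Fin l × Fin (K + 1) → ℝ) (r : ℕ → Fin l × Fin (K + 1) → ℝ)
    (hn : ∀ t i, 0 ≤ n t i) (hr : ∀ t i, 0 ≤ r t i)
    (hrsupp : ∀ t (b : Fin l) (a : Fin (K + 1)), a ≠ 0 → r t (b, a) = 0)
    (hpath : ∀ t, n (t + 1) = Matrix.vecMul (n t) P + r t)
    (hU : ∀ t (b : Fin l), ∑ a, n (t + 1) (b, a) = ∑ a, n t (b, a))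
    (hstr : ∀ t (b : Fin l),
      s b = (∑ a, n t (b, a)) / ∑ b', ∑ a, n t (b', a)) :
    ∃ sstar : Fin l × Fin (K + 1) → ℝ,
      Filter.Tendsto (fun t => (∑ i, n t i)⁻¹ • n t) Filter.atTop (nhds sstar) ∧
      ∀ i, Matrix.vecMul sstar P i ≤ sstar i := by
  classical
  set N : ℝ := ∑ i, n 0 i with hNdef
  -- total population constant
  have htot : ∀ t, ∑ i, n t i = N := by
    intro t
    induction t with
    | zero => rfl
    | succ t ih =>
      rw [← ih, Fintype.sum_prod_type, Fintype.sum_prod_type]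
      exact Finset.sum_congr rfl fun b _ => hU t b
  have hNpos : 0 < N := by
    rcases (Finset.sum_nonneg fun i _ => hn 0 i).lt_or_eq with h | h
    · exact h
    · exfalso
      have hz : ∀ b, s b = 0 := by
        intro b
        rw [hstr 0 b]
        have hd : ∑ b', ∑ a, n 0 (b', a) = 0 := by
          rw [← Fintype.sum_prod_type]; exact h.symm
        rw [hd, div_zero]
      rw [Finset.sum_congr rfl fun b _ => hz b, Finset.sum_const, smul_zero] at hs1
      exact one_ne_zero hs1.symm
  -- the basic seniority-shift identity
  have hsucc : ∀ t (b : Fin l) (a : Fin K),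
      n (t + 1) (b, a.succ) = n t (b, a.castSucc) * P (b, a.castSucc) (b, a.succ) := by
    intro t b a
    have h1 : n (t + 1) (b, a.succ) = ∑ i, n t i * P i (b, a.succ) := by
      rw [hpath t]
      simp [Matrix.vecMul, dotProduct, hrsupp t b a.succ (Fin.succ_ne_zero a)]
    rw [h1]
    rw [Finset.sum_eq_single (b, a.castSucc)]
    · intro i _ hne
      by_contra hP0
      have hPne : P i (b, a.succ) ≠ 0 := fun h0 => hP0 (by rw [h0, mul_zero])
      have hPne' : P (i.1, i.2) (b, a.succ) ≠ 0 := by rwa [Prod.mk.eta]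
      rcases hstruct i.1 i.2 b a.succ hPne' with ⟨hb, ha⟩ | ⟨_, h0⟩
      · apply hne
        have h2 : i.2 = a.castSucc := by
          apply Fin.ext
          simp only [Fin.val_succ, Fin.coe_castSucc] at ha ⊢
          omega
        rw [hb, ← h2]
      · exact Fin.succ_ne_zero a h0
    · intro h; exact absurd (Finset.mem_univ _) h
  -- a uniform bound c < 1 on the retention probabilities
  obtain ⟨c, hc0, hc1, hcq⟩ :
      ∃ c : ℝ, 0 ≤ c ∧ c < 1 ∧
        ∀ (b : Fin l) (a : Fin K), P (b, a.castSucc) (b, a.succ) ≤ c := by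
    set S : Finset ℝ := insert 0 (Finset.image
      (fun p : Fin l × Fin K => P (p.1, p.2.castSucc) (p.1, p.2.succ)) Finset.univ) with hS
    have hSne : S.Nonempty := ⟨0, Finset.mem_insert_self _ _⟩
    refine ⟨S.max' hSne, S.le_max' 0 (Finset.mem_insert_self _ _), ?_, ?_⟩
    · rcases Finset.mem_insert.mp (S.max'_mem hSne) with h | h
      · rw [h]; norm_num
      · obtain ⟨p, _, hp⟩ := Finset.mem_image.mp h
        rw [← hp]
        calc P (p.1, p.2.castSucc) (p.1, p.2.succ)
            ≤ ∑ j, P (p.1, p.2.castSucc) j :=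
              Finset.single_le_sum (fun j _ => hP _ j) (Finset.mem_univ _)
          _ < 1 := hrow _
    · intro b a
      exact S.le_max' _ (Finset.mem_insert_of_mem
        (Finset.mem_image.mpr ⟨(b, a), Finset.mem_univ _, rfl⟩))
  -- difference sequence
  set w : ℕ → Fin l × Fin (K + 1) → ℝ := fun t i => n (t + 1) i - n t i with hwdef
  have hw_sum : ∀ t (b : Fin l), ∑ a, w t (b, a) = 0 := by
    intro t b
    simp only [hwdef, Finset.sum_sub_distrib]
    rw [hU t b, sub_self]
  have hw_succ : ∀ t (b : Fin l) (a : Fin K),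
      w (t + 1) (b, a.succ) = P (b, a.castSucc) (b, a.succ) * w t (b, a.castSucc) := by
    intro t b a
    simp only [hwdef]
    rw [hsucc (t + 1) b a, hsucc t b a]
    ring
  have hw0 : ∀ t (b : Fin l),
      w (t + 1) (b, 0) = -∑ a : Fin K, P (b, a.castSucc) (b, a.succ) * w t (b, a.castSucc) := by
    intro t b
    have h := hw_sum (t + 1) b
    rw [Fin.sum_univ_succ] at h
    have h2 : ∑ a : Fin K, w (t + 1) (b, a.succ)
        = ∑ a : Fin K, P (b, a.castSucc) (b, a.succ) * w t (b, a.castSucc) :=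
      Finset.sum_congr rfl fun a _ => hw_succ t b a
    rw [h2] at h
    linarith
  -- per-organisational-state l¹ contraction
  have hcontr : ∀ t (b : Fin l), ∑ a, |w (t + 1) (b, a)| ≤ c * ∑ a, |w t (b, a)| := by
    intro t b
    have hlast : ∑ a : Fin K, w t (b, a.castSucc) = -w t (b, Fin.last K) := by
      have h := hw_sum t b
      rw [Fin.sum_univ_castSucc] at h
      linarith
    have e0 : w (t + 1) (b, 0) =
        (∑ a : Fin K, (c - P (b, a.castSucc) (b, a.succ)) * w t (b, a.castSucc))
          + c * w t (b, Fin.last K) := by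
      rw [hw0 t b]
      simp only [sub_mul]
      rw [Finset.sum_sub_distrib, ← Finset.mul_sum, hlast]
      ring
    have habs0 : |w (t + 1) (b, 0)| ≤
        (∑ a : Fin K, (c - P (b, a.castSucc) (b, a.succ)) * |w t (b, a.castSucc)|)
          + c * |w t (b, Fin.last K)| := by
      rw [e0]
      calc |(∑ a : Fin K, (c - P (b, a.castSucc) (b, a.succ)) * w t (b, a.castSucc))
            + c * w t (b, Fin.last K)|
          ≤ |∑ a : Fin K, (c - P (b, a.castSucc) (b, a.succ)) * w t (b, a.castSucc)|
            + |c * w t (b, Fin.last K)| := abs_add_le _ _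
        _ ≤ (∑ a : Fin K, |(c - P (b, a.castSucc) (b, a.succ)) * w t (b, a.castSucc)|)
            + |c * w t (b, Fin.last K)| := by
              gcongr
              exact Finset.abs_sum_le_sum_abs _ _
        _ = (∑ a : Fin K, (c - P (b, a.castSucc) (b, a.succ)) * |w t (b, a.castSucc)|)
            + c * |w t (b, Fin.last K)| := by
              rw [abs_mul, abs_of_nonneg hc0]
              congr 1
              refine Finset.sum_congr rfl fun a _ => ?_
              rw [abs_mul, abs_of_nonneg (sub_nonneg.mpr (hcq b a))]
    calc ∑ a, |w (t + 1) (b, a)|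
        = |w (t + 1) (b, 0)| + ∑ a : Fin K, |w (t + 1) (b, a.succ)| := by
          rw [Fin.sum_univ_succ]
      _ = |w (t + 1) (b, 0)|
            + ∑ a : Fin K, P (b, a.castSucc) (b, a.succ) * |w t (b, a.castSucc)| := by
          congr 1
          refine Finset.sum_congr rfl fun a _ => ?_
          rw [hw_succ t b a, abs_mul, abs_of_nonneg (hP _ _)]
      _ ≤ ((∑ a : Fin K, (c - P (b, a.castSucc) (b, a.succ)) * |w t (b, a.castSucc)|)
            + c * |w t (b, Fin.last K)|)
            + ∑ a : Fin K, P (b, a.castSucc) (b, a.succ) * |w t (b, a.castSucc)| := by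
          gcongr
      _ = (∑ a : Fin K, ((c - P (b, a.castSucc) (b, a.succ)) * |w t (b, a.castSucc)|
              + P (b, a.castSucc) (b, a.succ) * |w t (b, a.castSucc)|))
            + c * |w t (b, Fin.last K)| := by
          rw [Finset.sum_add_distrib]; ring
      _ = (∑ a : Fin K, c * |w t (b, a.castSucc)|) + c * |w t (b, Fin.last K)| := by
          congr 1
          refine Finset.sum_congr rfl fun a _ => ?_
          ring
      _ = c * ((∑ a : Fin K, |w t (b, a.castSucc)|) + |w t (b, Fin.last K)|) := by
          rw [mul_add, Finset.mul_sum]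
      _ = c * ∑ a, |w t (b, a)| := by
          rw [Fin.sum_univ_castSucc]
  -- global geometric decay
  set L : ℕ → ℝ := fun t => ∑ i, |w t i| with hLdef
  have hL0 : ∀ t, 0 ≤ L t := fun t => Finset.sum_nonneg fun i _ => abs_nonneg _
  have hLc : ∀ t, L (t + 1) ≤ c * L t := by
    intro t
    simp only [hLdef, Fintype.sum_prod_type]
    rw [Finset.mul_sum]
    exact Finset.sum_le_sum fun b _ => hcontr t b
  have hLgeom : ∀ t, L t ≤ L 0 * c ^ t := by
    intro t
    induction t with
    | zero => simp
    | succ t ih =>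
      calc L (t + 1) ≤ c * L t := hLc t
        _ ≤ c * (L 0 * c ^ t) := by
            exact mul_le_mul_of_nonneg_left ih hc0
        _ = L 0 * c ^ (t + 1) := by ring
  -- Cauchy and limit
  have hdist : ∀ t, dist (n t) (n (t + 1)) ≤ L 0 * c ^ t := by
    intro t
    have hnn : 0 ≤ L 0 * c ^ t := mul_nonneg (hL0 0) (pow_nonneg hc0 t)
    rw [dist_pi_le_iff hnn]
    intro i
    rw [Real.dist_eq]
    calc |n t i - n (t + 1) i| = |w t i| := by rw [abs_sub_comm]
      _ ≤ L t := Finset.single_le_sum (fun j (_ : j ∈ Finset.univ) => abs_nonneg (w t j))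
            (Finset.mem_univ i)
      _ ≤ L 0 * c ^ t := hLgeom t
  have hcauchy : CauchySeq n := cauchySeq_of_le_geometric c (L 0) hc1 hdist
  obtain ⟨nstar, hns⟩ := cauchySeq_tendsto_of_complete hcauchy
  have hpt : ∀ i, Filter.Tendsto (fun t => n t i) Filter.atTop (nhds (nstar i)) :=
    fun i => (tendsto_pi_nhds.mp hns) i
  refine ⟨N⁻¹ • nstar, ?_, ?_⟩
  · have heq : (fun t => (∑ i, n t i)⁻¹ • n t) = fun t => N⁻¹ • n t := by
      funext t; rw [htot t]
    rw [heq]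
    exact hns.const_smul N⁻¹
  · intro i
    have key : Matrix.vecMul nstar P i ≤ nstar i := by
      have hA : Filter.Tendsto (fun t => ∑ j, n t j * P j i) Filter.atTop
          (nhds (∑ j, nstar j * P j i)) :=
        tendsto_finset_sum _ fun j _ => (hpt j).mul_const _
      have hB : Filter.Tendsto (fun t => n (t + 1) i) Filter.atTop (nhds (nstar i)) :=
        (hpt i).comp (Filter.tendsto_add_atTop_nat 1)
      have hle : ∀ t, ∑ j, n t j * P j i ≤ n (t + 1) i := by
        intro t
        have h1 : n (t + 1) i = (∑ j, n t j * P j i) + r t i := by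
          rw [hpath t]
          simp [Matrix.vecMul, dotProduct]
        rw [h1]
        linarith [hr t i]
      have hvm : Matrix.vecMul nstar P i = ∑ j, nstar j * P j i := by
        simp [Matrix.vecMul, dotProduct]
      rw [hvm]
      exact le_of_tendsto_of_tendsto' hA hB hle
    have hvm2 : Matrix.vecMul (N⁻¹ • nstar) P i = N⁻¹ * Matrix.vecMul nstar P i := by
      simp [Matrix.vecMul, dotProduct, Finset.mul_sum, mul_assoc]
    rw [hvm2]
    have : N⁻¹ * Matrix.vecMul nstar P i ≤ N⁻¹ * nstar i :=
      mul_le_mul_of_nonneg_left key (inv_nonneg.mpr hNpos.le)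
    simpa using this
end

section
/- For a constant-size semi-Markov system with transition matrix P_SM (all row sums < 1), the SR-maintainable region equals the set of vectors s_SB* U where s_SB* ranges over probability vectors maintainable for P_SM with recruitment supported only on zero-seniority states; equivalently it is the convex hull of the L¹-normalized rows of (I - P_SM)^{-1} U corresponding to the zero-seniority states. -/
set_option linter.unusedSectionVars false
set_option maxHeartbeats 1000000


namespace SRAux
open Matrix Finset

variable {ι : Type*} [Fintype ι] [DecidableEq ι]

lemma vecMul_apply (v : ι → ℝ) (M : Matrix ι ι ℝ) (j : ι) :
    (v ᵥ* M) j = ∑ i, v i * M i j := rfl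

lemma vecMul_nonneg {P : Matrix ι ι ℝ} {v : ι → ℝ} (hP : ∀ i j, 0 ≤ P i j)
    (hv : ∀ i, 0 ≤ v i) (j : ι) : 0 ≤ (v ᵥ* P) j :=
  Finset.sum_nonneg fun i _ => mul_nonneg (hv i) (hP i j)

lemma pow_entry_nonneg {P : Matrix ι ι ℝ} (hP : ∀ i j, 0 ≤ P i j) (n : ℕ) :
    ∀ i j, 0 ≤ (P ^ n) i j := by
  induction n with
  | zero => intro i j; rw [pow_zero, Matrix.one_apply]; split_ifs <;> norm_num
  | succ n ih =>
    intro i j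
    rw [pow_succ, Matrix.mul_apply]
    exact Finset.sum_nonneg fun k _ => mul_nonneg (ih i k) (hP k j)

lemma l1_contract {P : Matrix ι ι ℝ} {ρ : ℝ} (hP : ∀ i j, 0 ≤ P i j)
    (hρ : ∀ i, ∑ j, P i j ≤ ρ) (v : ι → ℝ) :
    ∑ j, |(v ᵥ* P) j| ≤ ρ * ∑ i, |v i| := by
  calc ∑ j, |(v ᵥ* P) j| ≤ ∑ j, ∑ i, |v i| * P i j := by
        refine Finset.sum_le_sum fun j _ => ?_
        rw [vecMul_apply]
        refine (Finset.abs_sum_le_sum_abs _ _).trans (Finset.sum_le_sum fun i _ => ?_)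
        rw [abs_mul, abs_of_nonneg (hP i j)]
    _ = ∑ i, |v i| * ∑ j, P i j := by rw [Finset.sum_comm]; simp [Finset.mul_sum]
    _ ≤ ∑ i, |v i| * ρ :=
        Finset.sum_le_sum fun i _ => mul_le_mul_of_nonneg_left (hρ i) (abs_nonneg _)
    _ = ρ * ∑ i, |v i| := by rw [← Finset.sum_mul]; ring

lemma l1_contract_pow {P : Matrix ι ι ℝ} {ρ : ℝ} (hP : ∀ i j, 0 ≤ P i j) (hρ0 : 0 ≤ ρ)
    (hρ : ∀ i, ∑ j, P i j ≤ ρ) (v : ι → ℝ) (n : ℕ) :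
    ∑ j, |(v ᵥ* (P ^ n)) j| ≤ ρ ^ n * ∑ i, |v i| := by
  induction n with
  | zero => simp [Matrix.vecMul_one]
  | succ n ih =>
    rw [pow_succ, pow_succ, ← Matrix.vecMul_vecMul]
    calc ∑ j, |((v ᵥ* P ^ n) ᵥ* P) j| ≤ ρ * ∑ i, |(v ᵥ* P ^ n) i| := l1_contract hP hρ _
      _ ≤ ρ * (ρ ^ n * ∑ i, |v i|) := mul_le_mul_of_nonneg_left ih hρ0
      _ = ρ ^ n * ρ * ∑ i, |v i| := by ring

lemma telescope {P : Matrix ι ι ℝ} {x y : ι → ℝ} (h : y = y ᵥ* P + x) (n : ℕ) :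
    y = y ᵥ* (P ^ n) + x ᵥ* (∑ k ∈ Finset.range n, P ^ k) := by
  induction n with
  | zero => simp
  | succ n ih =>
    have h1 : y ᵥ* (P ^ (n + 1)) + x ᵥ* (P ^ n) = y ᵥ* (P ^ n) := by
      rw [pow_succ', ← Matrix.vecMul_vecMul, ← Matrix.add_vecMul, ← h]
    rw [Finset.sum_range_succ, Matrix.vecMul_add]
    conv_lhs => rw [ih, ← h1]
    abel

lemma fixed_nonneg {P : Matrix ι ι ℝ} {ρ : ℝ} (hP : ∀ i j, 0 ≤ P i j) (hρ0 : 0 ≤ ρ)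
    (hρ1 : ρ < 1) (hρ : ∀ i, ∑ j, P i j ≤ ρ) {x y : ι → ℝ} (hx : ∀ i, 0 ≤ x i)
    (h : y = y ᵥ* P + x) (j : ι) : 0 ≤ y j := by
  have key : ∀ n, -(ρ ^ n * ∑ i, |y i|) ≤ y j := by
    intro n
    have ht := congrFun (telescope h n) j
    have h1 : 0 ≤ (x ᵥ* (∑ k ∈ Finset.range n, P ^ k)) j := by
      refine Finset.sum_nonneg fun i _ => mul_nonneg (hx i) ?_
      show 0 ≤ (∑ k ∈ Finset.range n, P ^ k) i j
      have hsa : (∑ k ∈ Finset.range n, P ^ k) i j = ∑ k ∈ Finset.range n, (P ^ k) i j := by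
        simp [Matrix.sum_apply]
      rw [hsa]
      exact Finset.sum_nonneg fun k _ => pow_entry_nonneg hP k i j
    have h2 : -(ρ ^ n * ∑ i, |y i|) ≤ (y ᵥ* (P ^ n)) j := by
      have h4 := l1_contract_pow hP hρ0 hρ y n
      have h3 : |(y ᵥ* (P ^ n)) j| ≤ ∑ j', |(y ᵥ* (P ^ n)) j'| :=
        Finset.single_le_sum (f := fun j' => |(y ᵥ* (P ^ n)) j'|)
          (fun i _ => abs_nonneg _) (Finset.mem_univ j)
      have := neg_abs_le ((y ᵥ* (P ^ n)) j)
      linarith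
    simp only [Pi.add_apply] at ht
    linarith
  have hlim : Filter.Tendsto (fun n => -(ρ ^ n * ∑ i, |y i|)) Filter.atTop (nhds 0) := by
    have := tendsto_pow_atTop_nhds_zero_of_lt_one hρ0 hρ1
    simpa using (this.mul_const (∑ i, |y i|)).neg
  exact le_of_tendsto' hlim key

lemma isUnit_one_sub {P : Matrix ι ι ℝ} {ρ : ℝ} (hP : ∀ i j, 0 ≤ P i j)
    (hρ1 : ρ < 1) (hρ : ∀ i, ∑ j, P i j ≤ ρ) : IsUnit (1 - P) := by
  rw [← Matrix.vecMul_injective_iff_isUnit]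
  have key : ∀ v : ι → ℝ, v ᵥ* (1 - P) = 0 → v = 0 := by
    intro v hv
    have hvP : ∑ j, |(v ᵥ* P) j| = ∑ i, |v i| := by
      rw [Matrix.vecMul_sub, Matrix.vecMul_one, sub_eq_zero] at hv
      rw [← hv]
    have h2 := l1_contract hP hρ v
    rw [hvP] at h2
    have h3 : 0 ≤ ∑ i, |v i| := Finset.sum_nonneg fun i _ => abs_nonneg _
    have h4 : ∑ i, |v i| ≤ 0 := by nlinarith
    funext i
    have h5 : |v i| ≤ 0 :=
      le_trans (Finset.single_le_sum (fun i _ => abs_nonneg (v i)) (Finset.mem_univ i)) h4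
    have := abs_nonneg (v i)
    simpa using abs_eq_zero.mp (le_antisymm h5 this)
  intro a b hab
  have hab' : a ᵥ* (1 - P) = b ᵥ* (1 - P) := hab
  have h6 : (a - b) ᵥ* (1 - P) = 0 := by
    rw [Matrix.sub_vecMul, hab', sub_self]
  have := key _ h6
  exact sub_eq_zero.mp this


variable {P : Matrix ι ι ℝ} {ρ : ℝ}

lemma row_fixed (hdet : IsUnit (1 - P).det) (i0 : ι) :
    (fun j => (1 - P)⁻¹ i0 j) = (fun j => (1 - P)⁻¹ i0 j) ᵥ* P + Pi.single i0 1 := by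
  have h1 : (fun j => (1 - P)⁻¹ i0 j) ᵥ* (1 - P) = Pi.single i0 1 := by
    funext j
    rw [vecMul_apply]
    have h0 : ∑ k, (1 - P)⁻¹ i0 k * (1 - P) k j = ((1 - P)⁻¹ * (1 - P)) i0 j := by
      rw [Matrix.mul_apply]
    rw [h0, Matrix.nonsing_inv_mul _ hdet, Matrix.one_apply, Pi.single_apply]
    by_cases h : i0 = j
    · simp [h]
    · simp [h, Ne.symm h]
  rw [Matrix.vecMul_sub, Matrix.vecMul_one] at h1
  funext j
  have h2 := congrFun h1 j
  simp only [Pi.sub_apply, Pi.add_apply] at h2 ⊢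
  linarith

lemma inv_entry_nonneg (hP : ∀ i j, 0 ≤ P i j) (hρ0 : 0 ≤ ρ) (hρ1 : ρ < 1)
    (hρ : ∀ i, ∑ j, P i j ≤ ρ) (i0 j : ι) : 0 ≤ (1 - P)⁻¹ i0 j := by
  have hdet := (Matrix.isUnit_iff_isUnit_det _).1 (isUnit_one_sub hP hρ1 hρ)
  refine fixed_nonneg hP hρ0 hρ1 hρ (x := Pi.single i0 1) ?_ (row_fixed hdet i0) j
  intro i; rw [Pi.single_apply]; split_ifs <;> norm_num

lemma one_le_rowsum_inv (hP : ∀ i j, 0 ≤ P i j) (hρ0 : 0 ≤ ρ) (hρ1 : ρ < 1)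
    (hρ : ∀ i, ∑ j, P i j ≤ ρ) (i0 : ι) : 1 ≤ ∑ j, (1 - P)⁻¹ i0 j := by
  have hdet := (Matrix.isUnit_iff_isUnit_det _).1 (isUnit_one_sub hP hρ1 hρ)
  have h1 := row_fixed (P := P) hdet i0
  have h2 : ∑ j, (1 - P)⁻¹ i0 j
      = ∑ j, ((fun j => (1 - P)⁻¹ i0 j) ᵥ* P) j + 1 := by
    have h3 := congrArg (fun f : ι → ℝ => ∑ j, f j) h1
    simpa [Finset.sum_add_distrib, Pi.single_apply] using h3
  have h3 : 0 ≤ ∑ j, ((fun j => (1 - P)⁻¹ i0 j) ᵥ* P) j :=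
    Finset.sum_nonneg fun j _ =>
      vecMul_nonneg hP (fun i => inv_entry_nonneg hP hρ0 hρ1 hρ i0 i) j
  linarith

lemma solve (hdet : IsUnit (1 - P).det) {sstar rr : ι → ℝ}
    (hfix : sstar = sstar ᵥ* P + rr) : sstar = rr ᵥ* (1 - P)⁻¹ := by
  have h1 : sstar ᵥ* (1 - P) = rr := by
    rw [Matrix.vecMul_sub, Matrix.vecMul_one]
    nth_rewrite 1 [hfix]
    abel
  rw [← h1, Matrix.vecMul_vecMul, Matrix.mul_nonsing_inv _ hdet, Matrix.vecMul_one]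

end SRAux

/-- For a constant-size semi-Markov system with seniority-based transition matrix
`P` (rows strictly substochastic), the SR-maintainable region equals the set of
vectors `s_SB* U` with `s_SB*` a probability vector maintainable for `P` with
recruitment supported on zero-seniority states, and equals the convex hull of the
L¹-normalized rows of `(I - P)⁻¹ U` corresponding to the zero-seniority states. -/
theorem SR_maintainable_region {l K : ℕ}
    (P : Matrix (Fin l × Fin (K + 1)) (Fin l × Fin (K + 1)) ℝ)
    (hP : ∀ i j, 0 ≤ P i j)
    (hrow : ∀ i, ∑ j, P i j < 1)
    (hstruct : ∀ (b : Fin l) (a : Fin (K + 1)) (b' : Fin l) (a' : Fin (K + 1)),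
      P (b, a) (b', a') ≠ 0 →
        (b' = b ∧ (a' : ℕ) = (a : ℕ) + 1) ∨ (b' ≠ b ∧ a' = 0)) :
    {s : Fin l → ℝ | (∀ b, 0 ≤ s b) ∧ (∑ b, s b = 1) ∧
      ∃ (n : ℕ → Fin l × Fin (K + 1) → ℝ) (r : ℕ → Fin l × Fin (K + 1) → ℝ),
        (∀ t i, 0 ≤ n t i) ∧ (∀ t i, 0 ≤ r t i) ∧
        (∀ t (b : Fin l) (a : Fin (K + 1)), a ≠ 0 → r t (b, a) = 0) ∧
        (∀ t, n (t + 1) = Matrix.vecMul (n t) P + r t) ∧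
        (∀ t (b : Fin l), ∑ a, n (t + 1) (b, a) = ∑ a, n t (b, a)) ∧
        (∀ t (b : Fin l),
          s b = (∑ a, n t (b, a)) / ∑ b', ∑ a, n t (b', a))} =
      {u : Fin l → ℝ | ∃ sstar : Fin l × Fin (K + 1) → ℝ,
        (∀ i, 0 ≤ sstar i) ∧ (∑ i, sstar i = 1) ∧
        (∃ rr : Fin l × Fin (K + 1) → ℝ, (∀ i, 0 ≤ rr i) ∧
          (∀ (b : Fin l) (a : Fin (K + 1)), a ≠ 0 → rr (b, a) = 0) ∧
          sstar = Matrix.vecMul sstar P + rr) ∧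
        u = fun b => ∑ a, sstar (b, a)} ∧
    {u : Fin l → ℝ | ∃ sstar : Fin l × Fin (K + 1) → ℝ,
        (∀ i, 0 ≤ sstar i) ∧ (∑ i, sstar i = 1) ∧
        (∃ rr : Fin l × Fin (K + 1) → ℝ, (∀ i, 0 ≤ rr i) ∧
          (∀ (b : Fin l) (a : Fin (K + 1)), a ≠ 0 → rr (b, a) = 0) ∧
          sstar = Matrix.vecMul sstar P + rr) ∧
        u = fun b => ∑ a, sstar (b, a)} =
      convexHull ℝ {v : Fin l → ℝ | ∃ b : Fin l,
        v = fun b' => (∑ a, (1 - P)⁻¹ (b, 0) (b', a)) /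
          ∑ i, (1 - P)⁻¹ (b, 0) i} := by
  classical
  obtain ⟨ρ, hρ0, hρ1, hρ⟩ : ∃ ρ : ℝ, 0 ≤ ρ ∧ ρ < 1 ∧ ∀ i, ∑ j, P i j ≤ ρ := by
    rcases isEmpty_or_nonempty (Fin l × Fin (K + 1)) with h | h
    · exact ⟨0, le_refl 0, one_pos, fun i => (h.false i).elim⟩
    · obtain ⟨i0, -, hmax⟩ := Finset.exists_max_image Finset.univ
        (fun i => ∑ j, P i j) Finset.univ_nonempty
      exact ⟨∑ j, P i0 j, Finset.sum_nonneg fun j _ => hP i0 j, hrow i0,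
        fun i => hmax i (Finset.mem_univ i)⟩
  have hunit := SRAux.isUnit_one_sub hP hρ1 hρ
  have hdet := (Matrix.isUnit_iff_isUnit_det _).1 hunit
  have hQnn : ∀ i j, 0 ≤ (1 - P)⁻¹ i j := SRAux.inv_entry_nonneg hP hρ0 hρ1 hρ
  have hS1 : ∀ i0, 1 ≤ ∑ j, (1 - P)⁻¹ i0 j := SRAux.one_le_rowsum_inv hP hρ0 hρ1 hρ
  have hSpos : ∀ i0, (0:ℝ) < ∑ j, (1 - P)⁻¹ i0 j :=
    fun i0 => lt_of_lt_of_le one_pos (hS1 i0)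
  constructor
  · -- dynamic set = static set
    apply Set.Subset.antisymm
    · -- D ⊆ B (Cesàro averaging)
      rintro s ⟨hs0, hs1, n, r, hn0, hr0, hrz, hdyn, hconst, hratio⟩
      set c : Fin l → ℝ := fun b => ∑ a, n 0 (b, a) with hcdef
      have hct : ∀ t b, ∑ a, n t (b, a) = c b := by
        intro t
        induction t with
        | zero => intro b; rfl
        | succ t ih => intro b; rw [hconst t b]; exact ih b
      set N : ℝ := ∑ b, c b with hNdef
      have hcnn : ∀ b, 0 ≤ c b := fun b => Finset.sum_nonneg fun a _ => hn0 0 _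
      have hN0 : 0 ≤ N := Finset.sum_nonneg fun b _ => hcnn b
      have hsb : ∀ b, s b = c b / N := by
        intro b
        rw [hratio 0 b, hct 0 b]
      have hNne : N ≠ 0 := by
        intro h
        rw [Finset.sum_congr rfl fun b (_ : b ∈ Finset.univ) => hsb b] at hs1
        simp [h] at hs1
      have hnbound : ∀ t i, n t i ≤ N := by
        intro t i
        calc n t i = n t (i.1, i.2) := by rw [Prod.mk.eta]
          _ ≤ ∑ a, n t (i.1, a) :=
              Finset.single_le_sum (f := fun a => n t (i.1, a))
                (fun a _ => hn0 t _) (Finset.mem_univ i.2)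
          _ = c i.1 := hct t i.1
          _ ≤ N := Finset.single_le_sum (fun b _ => hcnn b) (Finset.mem_univ i.1)
      have hrbound : ∀ t i, r t i ≤ N := by
        intro t i
        have h1 := congrFun (hdyn t) i
        simp only [Pi.add_apply] at h1
        have h2 : 0 ≤ Matrix.vecMul (n t) P i := SRAux.vecMul_nonneg hP (hn0 t) i
        have h3 := hnbound (t + 1) i
        linarith
      set A : ℕ → (Fin l × Fin (K + 1)) → ℝ :=
        fun T i => (∑ t ∈ Finset.range T, n t i) / T with hAdef
      set R : ℕ → (Fin l × Fin (K + 1)) → ℝ :=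
        fun T i => (∑ t ∈ Finset.range T, r t i) / T with hRdef
      have havg : ∀ (f : ℕ → Fin l × Fin (K + 1) → ℝ), (∀ t i, 0 ≤ f t i) →
          (∀ t i, f t i ≤ N) → ∀ (T : ℕ) i, 0 ≤ (∑ t ∈ Finset.range T, f t i) / T ∧
            (∑ t ∈ Finset.range T, f t i) / T ≤ N := by
        intro f hf0 hfN T i
        constructor
        · exact div_nonneg (Finset.sum_nonneg fun t _ => hf0 t i) (Nat.cast_nonneg T)
        · rcases Nat.eq_zero_or_pos T with h | h
          · simp [h]; exact hN0
          · have hTpos : (0 : ℝ) < T := by exact_mod_cast h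
            rw [div_le_iff₀ hTpos]
            calc ∑ t ∈ Finset.range T, f t i ≤ ∑ _t ∈ Finset.range T, N :=
                  Finset.sum_le_sum fun t _ => hfN t i
              _ = T * N := by rw [Finset.sum_const, Finset.card_range, nsmul_eq_mul]
              _ = N * T := by ring
      have hcomp : IsCompact ((Set.Icc (0 : (Fin l × Fin (K + 1)) → ℝ) (fun _ => N)) ×ˢ
          (Set.Icc (0 : (Fin l × Fin (K + 1)) → ℝ) (fun _ => N))) :=
        IsCompact.prod isCompact_Icc isCompact_Icc
      obtain ⟨⟨Ah, Rh⟩, hmem, φ, hφ, hconv⟩ :=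
        hcomp.tendsto_subseq (x := fun T => (A T, R T)) (fun T =>
          Set.mk_mem_prod
            (Set.mem_Icc.2 ⟨fun i => (havg n hn0 hnbound T i).1,
              fun i => (havg n hn0 hnbound T i).2⟩)
            (Set.mem_Icc.2 ⟨fun i => (havg r hr0 hrbound T i).1,
              fun i => (havg r hr0 hrbound T i).2⟩))
      have hconvA : Filter.Tendsto (fun T => A (φ T)) Filter.atTop (nhds Ah) :=
        (continuous_fst.tendsto (Ah, Rh)).comp hconv
      have hconvR : Filter.Tendsto (fun T => R (φ T)) Filter.atTop (nhds Rh) :=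
        (continuous_snd.tendsto (Ah, Rh)).comp hconv
      have hAi : ∀ i, Filter.Tendsto (fun T => A (φ T) i) Filter.atTop (nhds (Ah i)) :=
        fun i => ((continuous_apply i).tendsto Ah).comp hconvA
      have hRi : ∀ i, Filter.Tendsto (fun T => R (φ T) i) Filter.atTop (nhds (Rh i)) :=
        fun i => ((continuous_apply i).tendsto Rh).comp hconvR
      have hAhnn : ∀ i, 0 ≤ Ah i := fun i => (Set.mem_Icc.1 (Set.mem_prod.1 hmem).1).1 i
      have hRhnn : ∀ i, 0 ≤ Rh i := fun i => (Set.mem_Icc.1 (Set.mem_prod.1 hmem).2).1 i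
      have hφge : ∀ T, T ≤ φ T := fun T => hφ.le_apply
      -- per-branch sums of the average are constant
      have hAsumT : ∀ T : ℕ, 1 ≤ T → ∀ b, ∑ a, A T (b, a) = c b := by
        intro T hT b
        have hTne : (T : ℝ) ≠ 0 := Nat.cast_ne_zero.2 (by omega)
        simp only [hAdef]
        rw [← Finset.sum_div, Finset.sum_comm,
          Finset.sum_congr rfl fun t (_ : t ∈ Finset.range T) => hct t b,
          Finset.sum_const, Finset.card_range, nsmul_eq_mul]
        field_simp
      have hAhsum : ∀ b, ∑ a, Ah (b, a) = c b := by
        intro b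
        have h1 : Filter.Tendsto (fun T => ∑ a, A (φ T) (b, a)) Filter.atTop
            (nhds (∑ a, Ah (b, a))) := tendsto_finset_sum _ fun a _ => hAi (b, a)
        have h2 : (fun T => ∑ a, A (φ T) (b, a)) =ᶠ[Filter.atTop]
            (fun _ => c b) := by
          filter_upwards [Filter.eventually_ge_atTop 1] with T hT
          exact hAsumT (φ T) (le_trans hT (hφge T)) b
        exact tendsto_nhds_unique (h1.congr' h2) tendsto_const_nhds
      have hRhz : ∀ (b : Fin l) (a : Fin (K + 1)), a ≠ 0 → Rh (b, a) = 0 := by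
        intro b a ha
        have h1 := hRi (b, a)
        have h2 : (fun T => R (φ T) (b, a)) = fun _ => (0 : ℝ) := by
          funext T
          simp only [hRdef]
          rw [Finset.sum_congr rfl fun t (_ : t ∈ Finset.range (φ T)) => hrz t b a ha]
          simp
        rw [h2] at h1
        exact tendsto_nhds_unique h1 tendsto_const_nhds
      -- the limit point is a fixed point
      have hfixh : Ah = Matrix.vecMul Ah P + Rh := by
        funext j
        have hft : ∀ T : ℕ, 1 ≤ T →
            Matrix.vecMul (A T) P j + R T j - A T j = (n T j - n 0 j) / T := by
          intro T hT
          have e1 : Matrix.vecMul (A T) P j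
              = (∑ t ∈ Finset.range T, Matrix.vecMul (n t) P j) / T := by
            rw [SRAux.vecMul_apply]
            simp only [hAdef]
            rw [Finset.sum_congr rfl fun k (_ : k ∈ Finset.univ) =>
              div_mul_eq_mul_div ((∑ t ∈ Finset.range T, n t k)) (T : ℝ) (P k j),
              ← Finset.sum_div]
            congr 1
            rw [Finset.sum_congr rfl fun k (_ : k ∈ Finset.univ) =>
              Finset.sum_mul (Finset.range T) (fun t => n t k) (P k j),
              Finset.sum_comm]
            exact Finset.sum_congr rfl fun t _ => (SRAux.vecMul_apply _ _ _).symm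
          rw [e1]
          simp only [hAdef, hRdef]
          rw [← add_div, ← sub_div]
          congr 1
          rw [← Finset.sum_add_distrib, ← Finset.sum_sub_distrib,
            ← Finset.sum_range_sub (fun t => n t j)]
          refine Finset.sum_congr rfl fun t _ => ?_
          have h4 := congrFun (hdyn t) j
          simp only [Pi.add_apply] at h4
          linarith
        have hZ : Filter.Tendsto (fun T : ℕ => (n T j - n 0 j) / (T : ℝ))
            Filter.atTop (nhds 0) := by
          refine squeeze_zero_norm (fun T => ?_) (tendsto_const_div_atTop_nhds_zero_nat N)
          rw [Real.norm_eq_abs, abs_div, abs_of_nonneg (Nat.cast_nonneg T : (0:ℝ) ≤ T)]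
          rcases Nat.eq_zero_or_pos T with h | h
          · simp [h]
          · have hTpos : (0 : ℝ) < T := by exact_mod_cast h
            rw [div_le_div_iff_of_pos_right hTpos]
            have h5 := hn0 T j; have h6 := hn0 0 j
            have h7 := hnbound T j; have h8 := hnbound 0 j
            rw [abs_le]; constructor <;> linarith
        have hZφ := hZ.comp hφ.tendsto_atTop
        have hlhs : Filter.Tendsto
            (fun T => Matrix.vecMul (A (φ T)) P j + R (φ T) j - A (φ T) j)
            Filter.atTop (nhds (Matrix.vecMul Ah P j + Rh j - Ah j)) := by
          refine Filter.Tendsto.sub (Filter.Tendsto.add ?_ (hRi j)) (hAi j)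
          have e2 : ∀ T, Matrix.vecMul (A (φ T)) P j = ∑ k, A (φ T) k * P k j :=
            fun T => SRAux.vecMul_apply _ _ _
          rw [show Matrix.vecMul Ah P j = ∑ k, Ah k * P k j from SRAux.vecMul_apply _ _ _]
          simp only [e2]
          exact tendsto_finset_sum _ fun k _ => (hAi k).mul_const _
        have heq : (fun T => Matrix.vecMul (A (φ T)) P j + R (φ T) j - A (φ T) j)
            =ᶠ[Filter.atTop] (fun T => (n (φ T) j - n 0 j) / (φ T : ℝ)) := by
          filter_upwards [Filter.eventually_ge_atTop 1] with T hT
          exact hft (φ T) (le_trans hT (hφge T))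
        have h9 := tendsto_nhds_unique (hlhs.congr' heq) hZφ
        simp only [Pi.add_apply]
        linarith
      -- assemble the stationary distribution
      refine ⟨fun i => Ah i / N, fun i => div_nonneg (hAhnn i) hN0, ?_,
        ⟨fun i => Rh i / N, fun i => div_nonneg (hRhnn i) hN0,
          fun b a ha => by
            show Rh (b, a) / N = 0
            rw [hRhz b a ha, zero_div], ?_⟩, ?_⟩
      · rw [Fintype.sum_prod_type]
        calc ∑ b, ∑ a, Ah (b, a) / N = ∑ b, (∑ a, Ah (b, a)) / N :=
              Finset.sum_congr rfl fun b _ => (Finset.sum_div _ _ _).symm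
          _ = ∑ b, c b / N := Finset.sum_congr rfl fun b _ => by rw [hAhsum b]
          _ = N / N := (Finset.sum_div _ _ _).symm
          _ = 1 := div_self hNne
      · funext j
        have h1 := congrFun hfixh j
        simp only [Pi.add_apply] at h1 ⊢
        have h2 : Matrix.vecMul (fun i => Ah i / N) P j = Matrix.vecMul Ah P j / N := by
          rw [SRAux.vecMul_apply, SRAux.vecMul_apply, Finset.sum_div]
          exact Finset.sum_congr rfl fun k _ => by ring
        rw [h2, h1, add_div]
      · funext b
        rw [hsb b, ← Finset.sum_div, hAhsum b]
    · -- B ⊆ D (constant trajectory)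
      rintro u ⟨sstar, hnn, hsum, ⟨rr, hrnn, hrz, hfix⟩, hu⟩
      subst hu
      refine ⟨fun b => Finset.sum_nonneg fun a _ => hnn _, ?_,
        fun _ => sstar, fun _ => rr, fun _ i => hnn i, fun _ i => hrnn i,
        fun _ b a ha => hrz b a ha, fun t => hfix, fun t b => rfl, fun t b => ?_⟩
      · rw [← Fintype.sum_prod_type]; exact hsum
      · have hden : ∑ b', ∑ a, sstar (b', a) = 1 := by
          rw [← Fintype.sum_prod_type]; exact hsum
        rw [hden, div_one]
  · -- static set = convex hull
    apply Set.Subset.antisymm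
    · -- B ⊆ hull
      rintro u ⟨sstar, hnn, hsum, ⟨rr, hrnn, hrz, hfix⟩, hu⟩
      subst hu
      have hsolve : sstar = Matrix.vecMul rr (1 - P)⁻¹ := SRAux.solve hdet hfix
      set w : Fin l → ℝ := fun b => rr (b, 0) * ∑ j, (1 - P)⁻¹ (b, 0) j with hwdef
      set v : Fin l → (Fin l → ℝ) := fun b => fun b' =>
        (∑ a, (1 - P)⁻¹ (b, 0) (b', a)) / ∑ i, (1 - P)⁻¹ (b, 0) i with hvdef
      have hsingle : ∀ f : Fin l × Fin (K + 1) → ℝ,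
          ∑ i, rr i * f i = ∑ b, rr (b, 0) * f (b, 0) := by
        intro f
        rw [Fintype.sum_prod_type]
        refine Finset.sum_congr rfl fun b _ => ?_
        rw [Finset.sum_eq_single 0]
        · intro a _ ha; rw [hrz b a ha]; ring
        · intro h; exact absurd (Finset.mem_univ 0) h
      have hsums : ∀ i, sstar i = ∑ b, rr (b, 0) * (1 - P)⁻¹ (b, 0) i := by
        intro i
        conv_lhs => rw [hsolve]
        rw [SRAux.vecMul_apply]
        exact hsingle fun k => (1 - P)⁻¹ k i
      have hwsum : ∑ b, w b = 1 := by
        rw [← hsum, Finset.sum_congr rfl fun i (_ : i ∈ Finset.univ) => hsums i,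
          Finset.sum_comm]
        exact Finset.sum_congr rfl fun b _ => Finset.mul_sum _ _ _
      have hu_eq : (fun b => ∑ a, sstar (b, a)) = Finset.univ.centerMass w v := by
        rw [Finset.centerMass_eq_of_sum_1 _ _ hwsum]
        funext b'
        rw [Finset.sum_apply]
        calc ∑ a, sstar (b', a)
            = ∑ a, ∑ b, rr (b, 0) * (1 - P)⁻¹ (b, 0) (b', a) :=
              Finset.sum_congr rfl fun a _ => hsums _
          _ = ∑ b, ∑ a, rr (b, 0) * (1 - P)⁻¹ (b, 0) (b', a) := Finset.sum_comm
          _ = ∑ b, (w b • v b) b' := by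
              refine Finset.sum_congr rfl fun b _ => ?_
              simp only [hwdef, hvdef, Pi.smul_apply, smul_eq_mul]
              rw [← Finset.mul_sum]
              have hne : (∑ j, (1 - P)⁻¹ (b, 0) j) ≠ 0 := ne_of_gt (hSpos (b, 0))
              have key : ∀ (c T S : ℝ), S ≠ 0 → (c * S) * (T / S) = c * T := by
                intro c T S hS; field_simp
              exact (key _ _ _ hne).symm
      rw [hu_eq]
      refine Finset.centerMass_mem_convexHull _
        (fun b _ => mul_nonneg (hrnn _) (le_of_lt (hSpos _)))
        (by rw [hwsum]; norm_num) (fun b _ => ⟨b, rfl⟩)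
    · -- hull ⊆ B
      refine convexHull_min ?_ ?_
      · -- vertices lie in B
        rintro v ⟨b, rfl⟩
        have SS := hSpos (b, 0)
        have Sne : (∑ j, (1 - P)⁻¹ (b, 0) j) ≠ 0 := ne_of_gt SS
        refine ⟨fun i => (1 - P)⁻¹ (b, 0) i / ∑ j, (1 - P)⁻¹ (b, 0) j,
          fun i => div_nonneg (hQnn _ _) (le_of_lt SS), ?_,
          ⟨Pi.single (b, 0) (∑ j, (1 - P)⁻¹ (b, 0) j)⁻¹, ?_, ?_, ?_⟩, ?_⟩
        · rw [← Finset.sum_div]; exact div_self Sne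
        · intro i; rw [Pi.single_apply]; split_ifs
          · positivity
          · exact le_rfl
        · intro b' a ha
          refine Pi.single_eq_of_ne ?_ _
          simp only [ne_eq, Prod.mk.injEq, not_and]
          intro _; exact ha
        · have h1 := SRAux.row_fixed (P := P) hdet (b, 0)
          funext j
          have h2 := congrFun h1 j
          simp only [Pi.add_apply] at h2 ⊢
          have h3 : Matrix.vecMul
              (fun i => (1 - P)⁻¹ (b, 0) i / ∑ j', (1 - P)⁻¹ (b, 0) j') P j
              = (Matrix.vecMul (fun i => (1 - P)⁻¹ (b, 0) i) P) j
                  / ∑ j', (1 - P)⁻¹ (b, 0) j' := by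
            rw [SRAux.vecMul_apply, SRAux.vecMul_apply, Finset.sum_div]
            exact Finset.sum_congr rfl fun k _ => by ring
          rw [h3, h2, add_div]
          congr 1
          rw [Pi.single_apply, Pi.single_apply]
          split_ifs
          · rw [one_div]
          · rw [zero_div]
        · funext b'
          rw [← Finset.sum_div]
      · -- B is convex
        intro x hx y hy α β hα hβ hαβ
        obtain ⟨sx, hsx0, hsx1, ⟨rx, hrx0, hrxz, hfx⟩, hux⟩ := hx
        obtain ⟨sy, hsy0, hsy1, ⟨ry, hry0, hryz, hfy⟩, huy⟩ := hy
        subst hux; subst huy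
        refine ⟨fun i => α * sx i + β * sy i,
          fun i => add_nonneg (mul_nonneg hα (hsx0 i)) (mul_nonneg hβ (hsy0 i)), ?_,
          ⟨fun i => α * rx i + β * ry i,
            fun i => add_nonneg (mul_nonneg hα (hrx0 i)) (mul_nonneg hβ (hry0 i)),
            fun b a ha => by
              show α * rx (b, a) + β * ry (b, a) = 0
              rw [hrxz b a ha, hryz b a ha]; ring, ?_⟩, ?_⟩
        · rw [Finset.sum_add_distrib, ← Finset.mul_sum, ← Finset.mul_sum, hsx1, hsy1]
          simpa using hαβ
        · funext j
          have e1 := congrFun hfx j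
          have e2 := congrFun hfy j
          simp only [Pi.add_apply] at e1 e2 ⊢
          have e3 : Matrix.vecMul (fun i => α * sx i + β * sy i) P j
              = α * (Matrix.vecMul sx P) j + β * (Matrix.vecMul sy P) j := by
            rw [SRAux.vecMul_apply, SRAux.vecMul_apply, SRAux.vecMul_apply,
              Finset.mul_sum, Finset.mul_sum, ← Finset.sum_add_distrib]
            exact Finset.sum_congr rfl fun k _ => by ring
          rw [e3]
          linear_combination α * e1 + β * e2
        · funext b
          simp only [Pi.add_apply, Pi.smul_apply, smul_eq_mul,
            Finset.mul_sum, Finset.sum_add_distrib]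
end
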